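/- Let a = (a_1,...,a_n) and b = (b_1,...,b_n) with all entries nonzero and define the energy E(a,b) = sum_{i=0}^{n-1} (prod_{j=1}^i b_j)(prod_{j=i+2}^n a_j). Then the energies of cyclic shifts satisfy the recurrence: a_{i+1} * E(a^(i), b^(i)) - b_{i+1} * E(a^(i+1), b^(i+1)) = prod_{j=1}^n a_j - prod_{j=1}^n b_j for all i (indices mod n). -/

import Mathlib

/-- Cyclic shift of a vector (indexed `0,…,n-1`) by `i`. -/
noncomputable def cshift (n : ℕ) (a : ℕ → ℂ) (i : ℕ) : ℕ → ℂ := fun j => a ((j + i) % n)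

/-- The energy `E(a,b) = ∑_{i=0}^{n-1} (∏_{j=1}^{i} b_j)(∏_{j=i+2}^{n} a_j)`. -/
noncomputable def energy (n : ℕ) (a b : ℕ → ℂ) : ℂ :=
  ∑ i ∈ Finset.range n, (∏ j ∈ Finset.range i, b j) * ∏ j ∈ Finset.Ico (i + 1) n, a j

/-!
Shifting once moves the factor `b₀` to the front of every `b`-product and the factor `a₀` to
the end of every `a`-product. Hence `b₀ E(a', b')` is the sum `a₀ E(a, b)` re-indexed by one,
except for its first term `a₀ a₁ ⋯ a_{n-1}` and the new last term `b₀ b₁ ⋯ b_{n-1}`, and the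
difference telescopes to `∏ a - ∏ b`. The general shift `i` reduces to this case because
`a^(i+1)` is the shift of `a^(i)` by one and shifts do not change the full products.
-/

open Finset

theorem prod_range_add_mod {M : Type*} [CommMonoid M] (f : ℕ → M) (n i : ℕ) :
    ∏ j ∈ range n, f ((j + i) % n) = ∏ j ∈ range n, f j := by
  rcases Nat.eq_zero_or_pos n with rfl | hn
  · simp
  have : NeZero n := ⟨hn.ne'⟩
  rw [← Fin.prod_univ_eq_prod_range, ← Fin.prod_univ_eq_prod_range]
  calc ∏ j : Fin n, f ((j + i) % n) = ∏ j : Fin n, f ↑(j + Fin.ofNat n i) := by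
        simp [Fin.val_add]
    _ = ∏ j : Fin n, f j := Equiv.prod_comp (Equiv.addRight (Fin.ofNat n i)) (fun j => f j)

section cshift

variable {n : ℕ} (a : ℕ → ℂ)

theorem cshift_apply_zero (i : ℕ) : cshift n a i 0 = a (i % n) := by
  simp [cshift]

theorem cshift_cshift (i k : ℕ) : cshift n (cshift n a i) k = cshift n a (i + k) := by
  funext j
  simp only [cshift, Nat.mod_add_mod]
  ring_nf

theorem prod_range_cshift (i : ℕ) : ∏ j ∈ range n, cshift n a i j = ∏ j ∈ range n, a j :=
  prod_range_add_mod a n i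

theorem cshift_one_apply_of_lt {j : ℕ} (hj : j + 1 < n) : cshift n a 1 j = a (j + 1) :=
  congrArg a (Nat.mod_eq_of_lt hj)

theorem cshift_one_apply_last (m : ℕ) : cshift (m + 1) a 1 m = a 0 := by
  simp [cshift]

theorem prod_range_cshift_one {k : ℕ} (hk : k < n) :
    ∏ j ∈ range k, cshift n a 1 j = ∏ j ∈ range k, a (j + 1) :=
  prod_congr rfl fun j hj => cshift_one_apply_of_lt a (by rw [mem_range] at hj; omega)

theorem prod_Ico_cshift_one {i m : ℕ} (hi : i < m) :
    ∏ j ∈ Ico (i + 1) (m + 1), cshift (m + 1) a 1 j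
      = (∏ j ∈ Ico (i + 2) (m + 1), a j) * a 0 := by
  rw [prod_Ico_succ_top (by omega), cshift_one_apply_last, ← prod_Ico_add' a (i + 1) m 1]
  congr 1
  exact prod_congr rfl fun j hj => cshift_one_apply_of_lt a (by rw [mem_Ico] at hj; omega)

end cshift

theorem mul_energy_term_cshift_one (a b : ℕ → ℂ) {i m : ℕ} (hi : i < m) :
    b 0 * ((∏ j ∈ range i, cshift (m + 1) b 1 j)
        * ∏ j ∈ Ico (i + 1) (m + 1), cshift (m + 1) a 1 j)
      = a 0 * ((∏ j ∈ range (i + 1), b j) * ∏ j ∈ Ico (i + 1 + 1) (m + 1), a j) := by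
  rw [prod_range_cshift_one b (by omega), prod_Ico_cshift_one a hi, prod_range_succ' b i]
  ring

theorem mul_energy_sub_mul_energy_cshift_one (n : ℕ) (a b : ℕ → ℂ) :
    a 0 * energy n a b - b 0 * energy n (cshift n a 1) (cshift n b 1)
      = (∏ j ∈ range n, a j) - ∏ j ∈ range n, b j := by
  cases n with
  | zero => simp [energy]
  | succ m =>
    have first : a 0 * ((∏ j ∈ range 0, b j) * ∏ j ∈ Ico (0 + 1) (m + 1), a j)
        = ∏ j ∈ range (m + 1), a j := by
      rw [prod_range_zero, one_mul, prod_range_eq_mul_Ico a m.succ_pos]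
    have last : b 0 * ((∏ j ∈ range m, cshift (m + 1) b 1 j)
        * ∏ j ∈ Ico (m + 1) (m + 1), cshift (m + 1) a 1 j) = ∏ j ∈ range (m + 1), b j := by
      rw [Ico_self, prod_empty, mul_one, prod_range_cshift_one b m.lt_succ_self,
        prod_range_succ' b m, mul_comm]
    unfold energy
    rw [mul_sum, mul_sum, sum_range_succ' _ m, sum_range_succ _ m, first, last,
      sum_congr rfl fun i hi => (mul_energy_term_cshift_one a b (mem_range.mp hi)).symm]
    ring

theorem energy_shift_recurrence_general (n : ℕ) (a b : ℕ → ℂ) :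
    ∀ i : ℕ,
      a (i % n) * energy n (cshift n a i) (cshift n b i)
        - b (i % n) * energy n (cshift n a (i + 1)) (cshift n b (i + 1))
      = (∏ j ∈ Finset.range n, a j) - ∏ j ∈ Finset.range n, b j := by
  intro i
  rw [← cshift_apply_zero a, ← cshift_apply_zero b, ← cshift_cshift a, ← cshift_cshift b,
    mul_energy_sub_mul_energy_cshift_one, prod_range_cshift, prod_range_cshift]

/-- Recurrence for the energies of cyclic shifts:
`a_{i+1} E(a^{(i)},b^{(i)}) - b_{i+1} E(a^{(i+1)},b^{(i+1)}) = ∏ a_j - ∏ b_j`. -/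
theorem energy_shift_recurrence (n : ℕ) (hn : 1 ≤ n) (a b : ℕ → ℂ)
    (ha : ∀ j, a j ≠ 0) (hb : ∀ j, b j ≠ 0) :
    ∀ i : ℕ,
      a (i % n) * energy n (cshift n a i) (cshift n b i)
        - b (i % n) * energy n (cshift n a (i + 1)) (cshift n b (i + 1))
      = (∏ j ∈ Finset.range n, a j) - ∏ j ∈ Finset.range n, b j :=
  energy_shift_recurrence_general n a b
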